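/- Let N ≥ 1, let A₀, A₁, A₂, A₃ : ℝ⁴ → M_N(ℂ) and θ : ℝ⁴ → M_N(ℂ) be smooth (C^∞), let Δ ∈ ℝ⁴ be a fixed vector, and let m ≥ 2 be an integer. For a gauge field configuration C define F_{μν}[C] = ∂_μ C_ν − ∂_ν C_μ + [C_μ, C_ν], G_ρ[C] = ∑_μ Δ^μ F_{μρ}[C], the covariant derivative (𝒟_C X) = ∑_μ Δ^μ (∂_μ X + [C_μ, X]), and the twist two gluon operator density O_g[C](x) = ∑_{ρ,σ} η^{ρσ} tr( G_ρ[C](x) · ( (𝒟_C)^{m−2} G_σ[C] )(x) ), where η^{ρσ} = diag(1,−1,−1,−1) and (𝒟_C)^{m−2} denotes (m−2)-fold iteration. Let B_μ = ∂_μ θ + [A_μ, θ]. Then for every x ∈ ℝ⁴, the derivative at t = 0 of the function t ↦ O_g[A + tB](x) is zero; i.e. the twist two gluon operator is invariant at first order under the infinitesimal gauge transformation, for every even or odd m ≥ 2. -/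

import Mathlib

noncomputable section

attribute [local instance] Matrix.normedAddCommGroup Matrix.normedSpace

/-- The matrix commutator `[X,Y] = XY − YX`. -/
def matComm {N : ℕ} (X Y : Matrix (Fin N) (Fin N) ℂ) : Matrix (Fin N) (Fin N) ℂ :=
  X * Y - Y * X

/-- The partial derivative `∂_μ f` of a matrix-valued function on `ℝ⁴`. -/
def pd {N : ℕ} (μ : Fin 4) (f : (Fin 4 → ℝ) → Matrix (Fin N) (Fin N) ℂ)
    (x : Fin 4 → ℝ) : Matrix (Fin N) (Fin N) ℂ :=
  fderiv ℝ f x (Pi.single μ 1)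

/-- The non-Abelian field strength `F_{μν}[C] = ∂_μ C_ν − ∂_ν C_μ + [C_μ, C_ν]`. -/
def fieldStrength {N : ℕ} (C : Fin 4 → (Fin 4 → ℝ) → Matrix (Fin N) (Fin N) ℂ)
    (μ ν : Fin 4) (x : Fin 4 → ℝ) : Matrix (Fin N) (Fin N) ℂ :=
  pd μ (C ν) x - pd ν (C μ) x + matComm (C μ x) (C ν x)

/-- The infinitesimal gauge variation `B_μ = ∂_μ θ + [A_μ, θ]`. -/
def gaugeVar {N : ℕ} (A : Fin 4 → (Fin 4 → ℝ) → Matrix (Fin N) (Fin N) ℂ)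
    (θ : (Fin 4 → ℝ) → Matrix (Fin N) (Fin N) ℂ)
    (μ : Fin 4) (x : Fin 4 → ℝ) : Matrix (Fin N) (Fin N) ℂ :=
  pd μ θ x + matComm (A μ x) (θ x)

/-- The `Δ`-contracted field strength `G_ρ[C] = ∑_μ Δ^μ F_{μρ}[C]`. -/
def Gdelta {N : ℕ} (Δ : Fin 4 → ℝ) (C : Fin 4 → (Fin 4 → ℝ) → Matrix (Fin N) (Fin N) ℂ)
    (ρ : Fin 4) (x : Fin 4 → ℝ) : Matrix (Fin N) (Fin N) ℂ :=
  ∑ μ, Δ μ • fieldStrength C μ ρ x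

/-- The `Δ`-contracted adjoint covariant derivative acting on matrix-valued functions:
`(𝒟_C X)(x) = ∑_μ Δ^μ (∂_μ X(x) + [C_μ(x), X(x)])`. -/
def covDfun {N : ℕ} (Δ : Fin 4 → ℝ)
    (C : Fin 4 → (Fin 4 → ℝ) → Matrix (Fin N) (Fin N) ℂ)
    (X : (Fin 4 → ℝ) → Matrix (Fin N) (Fin N) ℂ) :
    (Fin 4 → ℝ) → Matrix (Fin N) (Fin N) ℂ :=
  fun x => ∑ μ, Δ μ • (pd μ X x + matComm (C μ x) (X x))

/-- The inverse Minkowski metric `η^{ρσ} = diag(1,−1,−1,−1)` (as complex numbers). -/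
def etaUp (ρ σ : Fin 4) : ℂ :=
  if ρ = σ then (if ρ = 0 then 1 else -1) else 0

/-- The twist two gluon operator density
`O_g[C](x) = ∑_{ρ,σ} η^{ρσ} tr(G_ρ[C](x) · ((𝒟_C)^{m−2} G_σ[C])(x))`. -/
def Ogdensity {N : ℕ} (Δ : Fin 4 → ℝ) (m : ℕ)
    (C : Fin 4 → (Fin 4 → ℝ) → Matrix (Fin N) (Fin N) ℂ) (x : Fin 4 → ℝ) : ℂ :=
  ∑ ρ, ∑ σ, etaUp ρ σ *
    Matrix.trace (Gdelta Δ C ρ x * ((covDfun Δ C)^[m - 2] (Gdelta Δ C σ)) x)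

abbrev MatN (N : ℕ) := Matrix (Fin N) (Fin N) ℂ

variable {N : ℕ}

/-- Matrix multiplication as a continuous ℝ-bilinear map. -/
def mulCLM (N : ℕ) : MatN N →L[ℝ] MatN N →L[ℝ] MatN N :=
  LinearMap.toContinuousLinearMap
    { toFun := fun a => LinearMap.toContinuousLinearMap (LinearMap.mulLeft ℝ a)
      map_add' := by intro a b; ext c; simp [add_mul]
      map_smul' := by intro r a; ext c; simp [smul_mul_assoc] }

@[simp] lemma mulCLM_apply (a b : MatN N) : mulCLM N a b = a * b := rfl

lemma contDiff_mul2 {f g : (Fin 4 → ℝ) → MatN N} (hf : ContDiff ℝ (⊤:ℕ∞) f)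
    (hg : ContDiff ℝ (⊤:ℕ∞) g) : ContDiff ℝ (⊤:ℕ∞) (fun x => f x * g x) :=
  ((mulCLM N).isBoundedBilinearMap.contDiff).comp (hf.prodMk hg)

lemma cd_diff {E' F' : Type*} [NormedAddCommGroup E'] [NormedSpace ℝ E']
    [NormedAddCommGroup F'] [NormedSpace ℝ F'] {f : E' → F'}
    (hf : ContDiff ℝ (⊤:ℕ∞) f) : Differentiable ℝ f :=
  hf.differentiable (by simp)

lemma pd_add {f g : (Fin 4 → ℝ) → MatN N} {μ : Fin 4} {x : Fin 4 → ℝ}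
    (hf : DifferentiableAt ℝ f x) (hg : DifferentiableAt ℝ g x) :
    pd μ (fun y => f y + g y) x = pd μ f x + pd μ g x := by
  unfold pd; erw [fderiv_fun_add hf hg]; rfl

lemma pd_sub {f g : (Fin 4 → ℝ) → MatN N} {μ : Fin 4} {x : Fin 4 → ℝ}
    (hf : DifferentiableAt ℝ f x) (hg : DifferentiableAt ℝ g x) :
    pd μ (fun y => f y - g y) x = pd μ f x - pd μ g x := by
  unfold pd; erw [fderiv_fun_sub hf hg]; rfl

lemma pd_smul {f : (Fin 4 → ℝ) → MatN N} {μ : Fin 4} {x : Fin 4 → ℝ} (r : ℝ)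
    (hf : DifferentiableAt ℝ f x) :
    pd μ (fun y => r • f y) x = r • pd μ f x := by
  unfold pd
  erw [fderiv_fun_const_smul hf]; rfl

lemma pd_const {μ : Fin 4} {x : Fin 4 → ℝ} (c : MatN N) :
    pd μ (fun _ => c) x = 0 := by
  unfold pd; rw [fderiv_fun_const]; rfl

lemma pd_sum {ι : Type*} {s : Finset ι} {f : ι → (Fin 4 → ℝ) → MatN N} {μ : Fin 4}
    {x : Fin 4 → ℝ} (hf : ∀ i ∈ s, DifferentiableAt ℝ (f i) x) :
    pd μ (fun y => ∑ i ∈ s, f i y) x = ∑ i ∈ s, pd μ (f i) x := by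
  unfold pd; erw [fderiv_fun_sum hf]
  have := ContinuousLinearMap.sum_apply s (fun i => fderiv ℝ (f i) x) (Pi.single μ 1)
  exact this

lemma pd_mul {f g : (Fin 4 → ℝ) → MatN N} {μ : Fin 4} {x : Fin 4 → ℝ}
    (hf : DifferentiableAt ℝ f x) (hg : DifferentiableAt ℝ g x) :
    pd μ (fun y => f y * g y) x = pd μ f x * g x + f x * pd μ g x := by
  have h := ((mulCLM N).isBoundedBilinearMap.hasFDerivAt (f x, g x)).comp x
    (hf.hasFDerivAt.prodMk hg.hasFDerivAt)
  have h2 : HasFDerivAt (fun y => f y * g y)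
      (((mulCLM N).isBoundedBilinearMap.deriv (f x, g x)).comp
        ((fderiv ℝ f x).prod (fderiv ℝ g x))) x := h
  unfold pd
  erw [h2.fderiv]
  exact add_comm _ _

lemma pd_smooth {f : (Fin 4 → ℝ) → MatN N} (μ : Fin 4)
    (hf : ContDiff ℝ (⊤:ℕ∞) f) : ContDiff ℝ (⊤:ℕ∞) (pd μ f) := by
  letI : NormedAddCommGroup ((Fin 4 → ℝ) →L[ℝ] MatN N) := ContinuousLinearMap.toNormedAddCommGroup
  letI : NormedSpace ℝ ((Fin 4 → ℝ) →L[ℝ] MatN N) := ContinuousLinearMap.toNormedSpace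
  have h1 : ContDiff ℝ (⊤:ℕ∞) (fderiv ℝ f) :=
    hf.fderiv_right (by simp)
  exact h1.clm_apply contDiff_const

lemma pd_comm {f : (Fin 4 → ℝ) → MatN N} (μ ν : Fin 4) {x : Fin 4 → ℝ}
    (hf : ContDiff ℝ (⊤:ℕ∞) f) : pd μ (pd ν f) x = pd ν (pd μ f) x := by
  letI : NormedAddCommGroup ((Fin 4 → ℝ) →L[ℝ] MatN N) := ContinuousLinearMap.toNormedAddCommGroup
  letI : NormedSpace ℝ ((Fin 4 → ℝ) →L[ℝ] MatN N) := ContinuousLinearMap.toNormedSpace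
  have hd : ∀ y, HasFDerivAt f (fderiv ℝ f y) y := fun y =>
    ((cd_diff hf) y).hasFDerivAt
  have h1 : ContDiff ℝ (⊤:ℕ∞) (fderiv ℝ f) :=
    hf.fderiv_right (by simp)
  have h2 : HasFDerivAt (fderiv ℝ f) (fderiv ℝ (fderiv ℝ f) x) x :=
    ((cd_diff h1) x).hasFDerivAt
  have hsymm := second_derivative_symmetric hd h2
  have key : ∀ κ κ' : Fin 4, pd κ (pd κ' f) x
      = fderiv ℝ (fderiv ℝ f) x (Pi.single κ 1) (Pi.single κ' 1) := by
    intro κ κ'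
    unfold pd
    erw [fderiv_clm_apply ((cd_diff h1) x) (differentiableAt_const _)]
    erw [fderiv_fun_const]
    have h0 := map_zero (fderiv ℝ f x)
    exact (congrArg (· + (fderiv ℝ (fderiv ℝ f) x (Pi.single κ 1) (Pi.single κ' 1))) h0).trans
      (zero_add _)
  rw [key, key]; erw [hsymm]; rfl

/-! ### Polynomial families in `t` -/

/-- `f t x` is a polynomial in `t` with smooth coefficients. -/
def RepT {N : ℕ} (f : ℝ → (Fin 4 → ℝ) → MatN N) : Prop :=
  ∃ (n : ℕ) (c : ℕ → (Fin 4 → ℝ) → MatN N),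
    (∀ k, ContDiff ℝ (⊤:ℕ∞) (c k)) ∧
    ∀ t x, f t x = ∑ k ∈ Finset.range (n + 2), t ^ k • c k x

/-- Polynomial family with value `f0` and first-order variation `f1` at `t = 0`. -/
def PolyFam {N : ℕ} (f : ℝ → (Fin 4 → ℝ) → MatN N) (f0 f1 : (Fin 4 → ℝ) → MatN N) : Prop :=
  RepT f ∧ ContDiff ℝ (⊤:ℕ∞) f0 ∧ ContDiff ℝ (⊤:ℕ∞) f1 ∧
    (∀ x, f 0 x = f0 x) ∧ (∀ x, HasDerivAt (fun t => f t x) (f1 x) 0)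

lemma rep_eval {f : ℝ → (Fin 4 → ℝ) → MatN N} {n : ℕ} {c : ℕ → (Fin 4 → ℝ) → MatN N}
    (hrep : ∀ t x, f t x = ∑ k ∈ Finset.range (n + 2), t ^ k • c k x) (x : Fin 4 → ℝ) :
    f 0 x = c 0 x := by
  rw [hrep 0 x, Finset.sum_eq_single 0]
  · simp
  · intro k _ hk; simp [zero_pow hk]
  · intro h; exact absurd (by simp) h

lemma rep_deriv {f : ℝ → (Fin 4 → ℝ) → MatN N} {n : ℕ} {c : ℕ → (Fin 4 → ℝ) → MatN N}
    (hrep : ∀ t x, f t x = ∑ k ∈ Finset.range (n + 2), t ^ k • c k x) (x : Fin 4 → ℝ) :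
    HasDerivAt (fun t => f t x) (c 1 x) 0 := by
  have h : HasDerivAt (fun t : ℝ => ∑ k ∈ Finset.range (n + 2), t ^ k • c k x)
      (∑ k ∈ Finset.range (n + 2), (((k : ℝ)) * (0:ℝ) ^ (k - 1)) • c k x) 0 :=
    HasDerivAt.fun_sum (fun k _ => (hasDerivAt_pow k 0).smul_const _)
  have hval : (∑ k ∈ Finset.range (n + 2), (((k : ℝ)) * (0:ℝ) ^ (k - 1)) • c k x) = c 1 x := by
    rw [Finset.sum_eq_single 1]
    · norm_num
    · intro k _ hk
      rcases Nat.eq_zero_or_pos k with h0 | hpos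
      · subst h0; simp
      · have hk1 : k - 1 ≠ 0 := by omega
        simp [zero_pow hk1]
    · intro h; exact absurd (by simp) h
  rw [hval] at h
  have hfun : (fun t => f t x) = fun t : ℝ => ∑ k ∈ Finset.range (n + 2), t ^ k • c k x :=
    funext fun t => hrep t x
  rw [hfun]; exact h

lemma repT_mono {f : ℝ → (Fin 4 → ℝ) → MatN N} {n : ℕ} {c : ℕ → (Fin 4 → ℝ) → MatN N}
    (hc : ∀ k, ContDiff ℝ (⊤:ℕ∞) (c k))
    (hrep : ∀ t x, f t x = ∑ k ∈ Finset.range (n + 2), t ^ k • c k x)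
    {n' : ℕ} (hn : n ≤ n') :
    ∃ c' : ℕ → (Fin 4 → ℝ) → MatN N, (∀ k, ContDiff ℝ (⊤:ℕ∞) (c' k)) ∧
      ∀ t x, f t x = ∑ k ∈ Finset.range (n' + 2), t ^ k • c' k x := by
  refine ⟨fun k => if k < n + 2 then c k else fun _ => 0, ?_, ?_⟩
  · intro k; by_cases hk : k < n + 2 <;> simp [hk, contDiff_const, hc k]
  · intro t x
    rw [hrep t x]
    calc ∑ k ∈ Finset.range (n + 2), t ^ k • c k x
        = ∑ k ∈ Finset.range (n + 2),
            t ^ k • (if k < n + 2 then c k else fun _ => (0 : MatN N)) x := by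
          refine Finset.sum_congr rfl fun k hk => ?_
          simp only [Finset.mem_range] at hk; simp [hk]
      _ = ∑ k ∈ Finset.range (n' + 2),
            t ^ k • (if k < n + 2 then c k else fun _ => (0 : MatN N)) x := by
          refine Finset.sum_subset (Finset.range_subset_range.2 (by omega)) ?_
          intro k hk hk2
          simp only [Finset.mem_range] at hk hk2
          have hk3 : ¬ k < n + 2 := by omega
          simp [hk3]

lemma RepT.congr {f g : ℝ → (Fin 4 → ℝ) → MatN N} (h : RepT f)
    (hfg : ∀ t x, f t x = g t x) : RepT g := by
  obtain ⟨n, c, hc, hrep⟩ := h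
  exact ⟨n, c, hc, fun t x => (hfg t x) ▸ hrep t x⟩

lemma RepT.const (g : (Fin 4 → ℝ) → MatN N) (hg : ContDiff ℝ (⊤:ℕ∞) g) :
    RepT (fun _ => g) := by
  refine ⟨0, fun k => if k = 0 then g else fun _ => 0, ?_, ?_⟩
  · intro k; by_cases hk : k = 0 <;> simp [hk, hg, contDiff_const]
  · intro t x; simp [Finset.sum_range_succ]

lemma RepT.tsmul (g : (Fin 4 → ℝ) → MatN N) (hg : ContDiff ℝ (⊤:ℕ∞) g) :
    RepT (fun t x => t • g x) := by
  refine ⟨0, fun k => if k = 1 then g else fun _ => 0, ?_, ?_⟩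
  · intro k; by_cases hk : k = 1 <;> simp [hk, hg, contDiff_const]
  · intro t x; simp [Finset.sum_range_succ]

lemma RepT.add {f g : ℝ → (Fin 4 → ℝ) → MatN N} (hf : RepT f) (hg : RepT g) :
    RepT (fun t x => f t x + g t x) := by
  obtain ⟨n₁, c₁, hc₁, hrep₁⟩ := hf
  obtain ⟨n₂, c₂, hc₂, hrep₂⟩ := hg
  obtain ⟨c₁', hc₁', hrep₁'⟩ := repT_mono hc₁ hrep₁ (le_max_left n₁ n₂)
  obtain ⟨c₂', hc₂', hrep₂'⟩ := repT_mono hc₂ hrep₂ (le_max_right n₁ n₂)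
  refine ⟨max n₁ n₂, fun k x => c₁' k x + c₂' k x, fun k => (hc₁' k).add (hc₂' k), ?_⟩
  intro t x
  beta_reduce
  rw [hrep₁' t x, hrep₂' t x, ← Finset.sum_add_distrib]
  exact Finset.sum_congr rfl fun k _ => (smul_add _ _ _).symm

lemma RepT.smul (r : ℝ) {f : ℝ → (Fin 4 → ℝ) → MatN N} (hf : RepT f) :
    RepT (fun t x => r • f t x) := by
  obtain ⟨n, c, hc, hrep⟩ := hf
  refine ⟨n, fun k => fun x => r • c k x, fun k => (hc k).const_smul r, ?_⟩
  intro t x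
  beta_reduce
  rw [hrep t x, Finset.smul_sum]
  exact Finset.sum_congr rfl fun k _ => smul_comm _ _ _

lemma RepT.zero : RepT (fun _ _ => (0 : MatN N)) := RepT.const 0 contDiff_const

lemma RepT.mul {f g : ℝ → (Fin 4 → ℝ) → MatN N} (hf : RepT f) (hg : RepT g) :
    RepT (fun t x => f t x * g t x) := by
  obtain ⟨n, c, hc, hrepf⟩ := hf
  obtain ⟨m, d, hd, hrepg⟩ := hg
  refine ⟨n + m + 1, fun k x => ∑ i ∈ Finset.range (n + 2), ∑ j ∈ Finset.range (m + 2),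
      if i + j = k then c i x * d j x else 0, ?_, ?_⟩
  · intro k
    apply ContDiff.sum; intro i _
    apply ContDiff.sum; intro j _
    by_cases hij : i + j = k
    · simpa [hij] using contDiff_mul2 (hc i) (hd j)
    · simp [hij, contDiff_const]
  · intro t x
    beta_reduce
    rw [hrepf t x, hrepg t x, Finset.sum_mul_sum]
    have step1 : ∀ i j, (t ^ i • c i x) * (t ^ j • d j x) = t ^ (i + j) • (c i x * d j x) := by
      intro i j; rw [smul_mul_assoc, mul_smul_comm, smul_smul, pow_add]
    simp_rw [step1]
    rw [eq_comm]
    simp_rw [Finset.smul_sum, smul_ite, smul_zero]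
    rw [Finset.sum_comm]
    refine Finset.sum_congr rfl fun i hi => ?_
    rw [Finset.sum_comm]
    refine Finset.sum_congr rfl fun j hj => ?_
    rw [Finset.sum_ite_eq]
    rw [if_pos]
    simp only [Finset.mem_range] at hi hj ⊢
    omega

lemma HasDerivAt.matmul {u v : ℝ → MatN N} {u' v' : MatN N} {t : ℝ}
    (hu : HasDerivAt u u' t) (hv : HasDerivAt v v' t) :
    HasDerivAt (fun s => u s * v s) (u t * v' + u' * v t) t := by
  have h := ((mulCLM N).isBoundedBilinearMap.hasFDerivAt (u t, v t)).comp_hasDerivAt t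
    (hu.prodMk hv)
  have h2 : HasDerivAt (fun s => u s * v s)
      ((mulCLM N).isBoundedBilinearMap.deriv (u t, v t) (u', v')) t := h
  rwa [IsBoundedBilinearMap.deriv_apply] at h2

namespace PolyFam

lemma congr {f g : ℝ → (Fin 4 → ℝ) → MatN N} {f0 f1 g0 g1 : (Fin 4 → ℝ) → MatN N}
    (h : PolyFam f f0 f1) (hfg : ∀ t x, f t x = g t x) (h0 : f0 = g0) (h1 : f1 = g1) :
    PolyFam g g0 g1 := by
  obtain ⟨hr, hs0, hs1, hev, hdv⟩ := h
  subst h0; subst h1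
  exact ⟨hr.congr hfg, hs0, hs1, fun x => (hfg 0 x) ▸ hev x,
    fun x => (funext fun t => hfg t x : (fun t => f t x) = fun t => g t x) ▸ hdv x⟩

lemma const (g : (Fin 4 → ℝ) → MatN N) (hg : ContDiff ℝ (⊤:ℕ∞) g) :
    PolyFam (fun _ => g) g (fun _ => 0) :=
  ⟨RepT.const g hg, hg, contDiff_const, fun _ => rfl, fun x => hasDerivAt_const 0 (g x)⟩

lemma tsmul (g : (Fin 4 → ℝ) → MatN N) (hg : ContDiff ℝ (⊤:ℕ∞) g) :
    PolyFam (fun t x => t • g x) (fun _ => 0) g := by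
  refine ⟨RepT.tsmul g hg, contDiff_const, hg, fun x => by simp, fun x => ?_⟩
  have h := (hasDerivAt_id (0:ℝ)).smul_const (g x)
  simp only [id, one_smul] at h
  exact h

lemma add {f g : ℝ → (Fin 4 → ℝ) → MatN N} {f0 f1 g0 g1 : (Fin 4 → ℝ) → MatN N}
    (hf : PolyFam f f0 f1) (hg : PolyFam g g0 g1) :
    PolyFam (fun t x => f t x + g t x) (fun x => f0 x + g0 x) (fun x => f1 x + g1 x) := by
  obtain ⟨hrf, hf0, hf1, hevf, hdvf⟩ := hf
  obtain ⟨hrg, hg0, hg1, hevg, hdvg⟩ := hg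
  exact ⟨hrf.add hrg, hf0.add hg0, hf1.add hg1,
    fun x => by beta_reduce; rw [hevf x, hevg x], fun x => (hdvf x).add (hdvg x)⟩

lemma sub {f g : ℝ → (Fin 4 → ℝ) → MatN N} {f0 f1 g0 g1 : (Fin 4 → ℝ) → MatN N}
    (hf : PolyFam f f0 f1) (hg : PolyFam g g0 g1) :
    PolyFam (fun t x => f t x - g t x) (fun x => f0 x - g0 x) (fun x => f1 x - g1 x) := by
  obtain ⟨hrf, hf0, hf1, hevf, hdvf⟩ := hf
  obtain ⟨hrg, hg0, hg1, hevg, hdvg⟩ := hg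
  refine ⟨?_, hf0.sub hg0, hf1.sub hg1,
    fun x => by beta_reduce; rw [hevf x, hevg x], fun x => (hdvf x).sub (hdvg x)⟩
  exact (hrf.add (hrg.smul (-1))).congr (fun t x => by simp [sub_eq_add_neg])

lemma smul (r : ℝ) {f : ℝ → (Fin 4 → ℝ) → MatN N} {f0 f1 : (Fin 4 → ℝ) → MatN N}
    (hf : PolyFam f f0 f1) :
    PolyFam (fun t x => r • f t x) (fun x => r • f0 x) (fun x => r • f1 x) := by
  obtain ⟨hrf, hf0, hf1, hevf, hdvf⟩ := hf
  exact ⟨hrf.smul r, hf0.const_smul r, hf1.const_smul r,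
    fun x => by beta_reduce; rw [hevf x], fun x => (hdvf x).const_smul r⟩

lemma zero : PolyFam (fun _ _ => (0 : MatN N)) (fun _ => 0) (fun _ => 0) :=
  PolyFam.const (fun _ => 0) contDiff_const

lemma mul {f g : ℝ → (Fin 4 → ℝ) → MatN N} {f0 f1 g0 g1 : (Fin 4 → ℝ) → MatN N}
    (hf : PolyFam f f0 f1) (hg : PolyFam g g0 g1) :
    PolyFam (fun t x => f t x * g t x) (fun x => f0 x * g0 x)
      (fun x => f0 x * g1 x + f1 x * g0 x) := by
  obtain ⟨hrf, hf0, hf1, hevf, hdvf⟩ := hf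
  obtain ⟨hrg, hg0, hg1, hevg, hdvg⟩ := hg
  refine ⟨hrf.mul hrg, contDiff_mul2 hf0 hg0,
    (contDiff_mul2 hf0 hg1).add (contDiff_mul2 hf1 hg0),
    fun x => by beta_reduce; rw [hevf x, hevg x], fun x => ?_⟩
  have h := (hdvf x).matmul (hdvg x)
  rwa [hevf x, hevg x] at h

lemma matC {f g : ℝ → (Fin 4 → ℝ) → MatN N} {f0 f1 g0 g1 : (Fin 4 → ℝ) → MatN N}
    (hf : PolyFam f f0 f1) (hg : PolyFam g g0 g1) :
    PolyFam (fun t x => matComm (f t x) (g t x)) (fun x => matComm (f0 x) (g0 x))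
      (fun x => matComm (f0 x) (g1 x) + matComm (f1 x) (g0 x)) := by
  refine ((hf.mul hg).sub (hg.mul hf)).congr (fun t x => rfl) rfl ?_
  funext x
  simp only [matComm]
  abel

lemma sum {ι : Type*} [DecidableEq ι] {s : Finset ι}
    {F : ι → ℝ → (Fin 4 → ℝ) → MatN N} {F0 F1 : ι → (Fin 4 → ℝ) → MatN N}
    (h : ∀ i ∈ s, PolyFam (F i) (F0 i) (F1 i)) :
    PolyFam (fun t x => ∑ i ∈ s, F i t x) (fun x => ∑ i ∈ s, F0 i x)
      (fun x => ∑ i ∈ s, F1 i x) := by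
  classical
  induction s using Finset.cons_induction with
  | empty =>
    refine PolyFam.zero.congr (fun t x => by rw [Finset.sum_empty]) ?_ ?_ <;>
      · funext x; rw [Finset.sum_empty]
  | cons a s' ha ih =>
    refine ((h a (Finset.mem_cons_self a s')).add
      (ih fun i hi => h i (Finset.mem_cons_of_mem hi))).congr (fun t x => ?_) ?_ ?_
    · rw [Finset.sum_cons]
    · funext x; rw [Finset.sum_cons]
    · funext x; rw [Finset.sum_cons]

lemma pdfam (μ : Fin 4) {f : ℝ → (Fin 4 → ℝ) → MatN N} {f0 f1 : (Fin 4 → ℝ) → MatN N}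
    (hf : PolyFam f f0 f1) :
    PolyFam (fun t x => pd μ (f t) x) (pd μ f0) (pd μ f1) := by
  obtain ⟨⟨n, c, hc, hrep⟩, hf0, hf1, hev, hdv⟩ := hf
  have hc0 : c 0 = f0 := funext fun x => (rep_eval hrep x).symm.trans (hev x)
  have hc1 : c 1 = f1 := funext fun x => (rep_deriv hrep x).unique (hdv x)
  have key : ∀ t x, pd μ (f t) x = ∑ k ∈ Finset.range (n + 2), t ^ k • pd μ (c k) x := by
    intro t x
    have hft : f t = fun y => ∑ k ∈ Finset.range (n + 2), t ^ k • c k y :=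
      funext fun y => hrep t y
    rw [hft, pd_sum (f := fun k y => t ^ k • c k y) (fun k _ => ((cd_diff (hc k)) x).const_smul (t ^ k))]
    exact Finset.sum_congr rfl fun k _ => pd_smul (t ^ k) ((cd_diff (hc k)) x)
  refine ⟨⟨n, fun k => pd μ (c k), fun k => pd_smooth μ (hc k), key⟩,
    pd_smooth μ hf0, pd_smooth μ hf1, fun x => ?_, fun x => ?_⟩
  · have := rep_eval (f := fun t x => pd μ (f t) x) key x
    rwa [hc0] at this
  · have := rep_deriv (f := fun t x => pd μ (f t) x) key x
    rwa [hc1] at this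

end PolyFam


/-! ### The gauge-covariance algebra -/

lemma pd_matComm {f g : (Fin 4 → ℝ) → MatN N} {μ : Fin 4} {x : Fin 4 → ℝ}
    (hf : ContDiff ℝ (⊤:ℕ∞) f) (hg : ContDiff ℝ (⊤:ℕ∞) g) :
    pd μ (fun y => matComm (f y) (g y)) x
      = matComm (pd μ f x) (g x) + matComm (f x) (pd μ g x) := by
  have hfd := (cd_diff hf) x
  have hgd := (cd_diff hg) x
  have hfg := (cd_diff (contDiff_mul2 hf hg)) x
  have hgf := (cd_diff (contDiff_mul2 hg hf)) x
  show pd μ (fun y => f y * g y - g y * f y) x = _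
  rw [pd_sub hfg hgf, pd_mul hfd hgd, pd_mul hgd hfd]
  simp only [matComm]
  abel

lemma matComm_smul_left (r : ℝ) (X Y : MatN N) :
    matComm (r • X) Y = r • matComm X Y := by
  simp [matComm, smul_mul_assoc, mul_smul_comm, smul_sub]

lemma matComm_sum_left {ι : Type*} (s : Finset ι) (f : ι → MatN N) (Y : MatN N) :
    matComm (∑ i ∈ s, f i) Y = ∑ i ∈ s, matComm (f i) Y := by
  simp [matComm, Finset.sum_mul, Finset.mul_sum, Finset.sum_sub_distrib]


/-! ### The concrete one-parameter family of gauge fields -/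

section Families

variable {N : ℕ} (A : Fin 4 → (Fin 4 → ℝ) → MatN N)
  (θ : (Fin 4 → ℝ) → MatN N) (Δ : Fin 4 → ℝ)

/-- The gauge-transformed family `C_t = A + t B`. -/
def Ct (t : ℝ) : Fin 4 → (Fin 4 → ℝ) → MatN N :=
  fun μ y => A μ y + t • gaugeVar A θ μ y

/-- First-order variation of the field strength. -/
def dF (μ ν : Fin 4) : (Fin 4 → ℝ) → MatN N := fun x =>
  (pd μ (gaugeVar A θ ν) x - pd ν (gaugeVar A θ μ) x) +
    (matComm (A μ x) (gaugeVar A θ ν x) + matComm (gaugeVar A θ μ x) (A ν x))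

/-- First-order variation of `G_ρ`. -/
def dG (ρ : Fin 4) : (Fin 4 → ℝ) → MatN N := fun x => ∑ μ, Δ μ • dF A θ μ ρ x

/-- First-order variation of the iterated covariant derivative of `G_σ`. -/
def dK (σ : Fin 4) : ℕ → ((Fin 4 → ℝ) → MatN N)
  | 0 => dG A θ Δ σ
  | (k+1) => fun x => covDfun Δ A (dK σ k) x +
      ∑ μ, Δ μ • matComm (gaugeVar A θ μ x) (((covDfun Δ A)^[k] (Gdelta Δ A σ)) x)

variable (hA : ∀ μ, ContDiff ℝ (⊤:ℕ∞) (A μ)) (hθ : ContDiff ℝ (⊤:ℕ∞) θ)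

lemma contDiff_matComm {f g : (Fin 4 → ℝ) → MatN N} (hf : ContDiff ℝ (⊤:ℕ∞) f)
    (hg : ContDiff ℝ (⊤:ℕ∞) g) : ContDiff ℝ (⊤:ℕ∞) (fun x => matComm (f x) (g x)) :=
  (contDiff_mul2 hf hg).sub (contDiff_mul2 hg hf)

include hA hθ

lemma smooth_gaugeVar (μ : Fin 4) : ContDiff ℝ (⊤:ℕ∞) (gaugeVar A θ μ) :=
  (pd_smooth μ hθ).add (contDiff_matComm (hA μ) hθ)

omit hθ in
lemma smooth_covD {X : (Fin 4 → ℝ) → MatN N} (hX : ContDiff ℝ (⊤:ℕ∞) X) :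
    ContDiff ℝ (⊤:ℕ∞) (covDfun Δ A X) := by
  refine ContDiff.sum fun μ _ => ?_
  exact (((pd_smooth μ hX).add (contDiff_matComm (hA μ) hX))).const_smul (Δ μ)

omit hθ in
lemma smooth_G (ρ : Fin 4) : ContDiff ℝ (⊤:ℕ∞) (Gdelta Δ A ρ) := by
  refine ContDiff.sum fun μ _ => ?_
  refine ContDiff.const_smul (Δ μ) ?_
  exact ((pd_smooth μ (hA ρ)).sub (pd_smooth ρ (hA μ))).add
    (contDiff_matComm (hA μ) (hA ρ))

omit hθ in
lemma smooth_K (σ : Fin 4) : ∀ k, ContDiff ℝ (⊤:ℕ∞) ((covDfun Δ A)^[k] (Gdelta Δ A σ))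
  | 0 => smooth_G A Δ hA σ
  | (k+1) => by
      rw [Function.iterate_succ_apply']
      exact smooth_covD A Δ hA (smooth_K σ k)

lemma PF_C (μ : Fin 4) :
    PolyFam (fun t x => Ct A θ t μ x) (A μ) (gaugeVar A θ μ) := by
  refine ((PolyFam.const (A μ) (hA μ)).add
    (PolyFam.tsmul (gaugeVar A θ μ) (smooth_gaugeVar A θ hA hθ μ))).congr
    (fun t x => rfl) ?_ ?_
  · funext x; simp
  · funext x; simp

lemma PF_F (μ ν : Fin 4) :
    PolyFam (fun t x => fieldStrength (Ct A θ t) μ ν x)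
      (fun x => fieldStrength A μ ν x) (dF A θ μ ν) := by
  refine ((((PF_C A θ hA hθ ν).pdfam μ).sub ((PF_C A θ hA hθ μ).pdfam ν)).add
    ((PF_C A θ hA hθ μ).matC (PF_C A θ hA hθ ν))).congr (fun t x => rfl) rfl rfl

lemma PF_G (ρ : Fin 4) :
    PolyFam (fun t x => Gdelta Δ (Ct A θ t) ρ x) (Gdelta Δ A ρ) (dG A θ Δ ρ) := by
  refine (PolyFam.sum (s := Finset.univ)
    (fun μ _ => (PF_F A θ hA hθ μ ρ).smul (Δ μ))).congr (fun t x => rfl) rfl rfl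

lemma PF_covD {X : ℝ → (Fin 4 → ℝ) → MatN N} {X0 X1 : (Fin 4 → ℝ) → MatN N}
    (hX : PolyFam X X0 X1) :
    PolyFam (fun t x => covDfun Δ (Ct A θ t) (X t) x) (covDfun Δ A X0)
      (fun x => covDfun Δ A X1 x + ∑ μ, Δ μ • matComm (gaugeVar A θ μ x) (X0 x)) := by
  refine (PolyFam.sum (s := Finset.univ) (fun μ _ =>
    ((hX.pdfam μ).add ((PF_C A θ hA hθ μ).matC hX)).smul (Δ μ))).congr
    (fun t x => rfl) rfl ?_
  funext x
  beta_reduce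
  have h1 : ∀ μ : Fin 4, Δ μ • (pd μ X1 x +
        (matComm (A μ x) (X1 x) + matComm (gaugeVar A θ μ x) (X0 x)))
      = Δ μ • (pd μ X1 x + matComm (A μ x) (X1 x))
        + Δ μ • matComm (gaugeVar A θ μ x) (X0 x) := fun μ => by
    rw [← add_assoc, smul_add]
  simp_rw [h1]
  rw [Finset.sum_add_distrib]
  rfl

lemma PF_K (σ : Fin 4) : ∀ k,
    PolyFam (fun t x => ((covDfun Δ (Ct A θ t))^[k] (Gdelta Δ (Ct A θ t) σ)) x)
      ((covDfun Δ A)^[k] (Gdelta Δ A σ)) (dK A θ Δ σ k)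
  | 0 => by
      refine (PF_G A θ Δ hA hθ σ).congr (fun t x => rfl) rfl rfl
  | (k+1) => by
      refine (PF_covD A θ Δ hA hθ (PF_K σ k)).congr (fun t x => ?_) ?_ rfl
      · rw [Function.iterate_succ_apply']
      · rw [Function.iterate_succ_apply']

lemma dF_eq (μ ν : Fin 4) :
    dF A θ μ ν = fun x => matComm (fieldStrength A μ ν x) (θ x) := by
  funext x
  have hpdB : ∀ κ κ' : Fin 4, pd κ (gaugeVar A θ κ') x
      = pd κ (pd κ' θ) x + (matComm (pd κ (A κ') x) (θ x)
        + matComm (A κ' x) (pd κ θ x)) := by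
    intro κ κ'
    have h : gaugeVar A θ κ' = fun y => pd κ' θ y + matComm (A κ' y) (θ y) := rfl
    rw [h, pd_add (cd_diff (pd_smooth κ' hθ) x)
      (cd_diff (contDiff_matComm (hA κ') hθ) x), pd_matComm (hA κ') hθ]
  show (pd μ (gaugeVar A θ ν) x - pd ν (gaugeVar A θ μ) x) +
      (matComm (A μ x) (gaugeVar A θ ν x) + matComm (gaugeVar A θ μ x) (A ν x))
      = matComm (pd μ (A ν) x - pd ν (A μ) x + matComm (A μ x) (A ν x)) (θ x)
  rw [hpdB μ ν, hpdB ν μ, pd_comm μ ν hθ]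
  simp only [matComm, gaugeVar]
  noncomm_ring

lemma dG_eq (ρ : Fin 4) :
    dG A θ Δ ρ = fun x => matComm (Gdelta Δ A ρ x) (θ x) := by
  funext x
  show (∑ μ, Δ μ • dF A θ μ ρ x) = _
  simp only [dF_eq A θ hA hθ]
  simp only [← matComm_smul_left]
  rw [← matComm_sum_left]
  rfl

lemma covD_matComm {X : (Fin 4 → ℝ) → MatN N} (hX : ContDiff ℝ (⊤:ℕ∞) X)
    (x : Fin 4 → ℝ) :
    covDfun Δ A (fun y => matComm (X y) (θ y)) x
        + ∑ μ, Δ μ • matComm (gaugeVar A θ μ x) (X x)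
      = matComm (covDfun Δ A X x) (θ x) := by
  show (∑ μ, Δ μ • (pd μ (fun y => matComm (X y) (θ y)) x
      + matComm ((A μ) x) (matComm (X x) (θ x))))
      + ∑ μ, Δ μ • matComm (gaugeVar A θ μ x) (X x)
      = matComm (∑ μ, Δ μ • (pd μ X x + matComm ((A μ) x) (X x))) (θ x)
  rw [matComm_sum_left, ← Finset.sum_add_distrib]
  refine Finset.sum_congr rfl fun μ _ => ?_
  rw [← smul_add, matComm_smul_left]
  congr 1
  rw [pd_matComm hX hθ]
  simp only [matComm, gaugeVar]
  noncomm_ring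

lemma dK_eq (σ : Fin 4) : ∀ k,
    dK A θ Δ σ k = fun x => matComm (((covDfun Δ A)^[k] (Gdelta Δ A σ)) x) (θ x)
  | 0 => dG_eq A θ Δ hA hθ σ
  | (k+1) => by
      funext x
      show covDfun Δ A (dK A θ Δ σ k) x
          + ∑ μ, Δ μ • matComm (gaugeVar A θ μ x) (((covDfun Δ A)^[k] (Gdelta Δ A σ)) x)
          = _
      rw [dK_eq σ k, covD_matComm A θ Δ hA hθ (smooth_K A Δ hA σ k) x]
      conv_rhs => rw [Function.iterate_succ_apply']

end Families

/-- Trace of a matrix as a continuous ℝ-linear map. -/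
def trCLM (N : ℕ) : MatN N →L[ℝ] ℂ :=
  LinearMap.toContinuousLinearMap ((Matrix.traceLinearMap (Fin N) ℂ ℂ).restrictScalars ℝ)

@[simp] lemma trCLM_apply {N : ℕ} (M : MatN N) : trCLM N M = M.trace := rfl

lemma trace_cancel {N : ℕ} (G K T : MatN N) :
    Matrix.trace (G * matComm K T + matComm G T * K) = 0 := by
  simp only [matComm, mul_sub, sub_mul, Matrix.trace_add, Matrix.trace_sub]
  rw [show G * (K * T) = (G * K) * T from (mul_assoc _ _ _).symm,
    Matrix.trace_mul_comm (G * K) T,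
    show G * T * K = G * (T * K) from mul_assoc _ _ _,
    show T * G * K = T * (G * K) from mul_assoc _ _ _]
  abel

/-- The twist two gluon operator is invariant at first order under the
infinitesimal gauge transformation `B_μ = ∂_μ θ + [A_μ, θ]`:
`d/dt O_g[A + tB](x) |_{t=0} = 0`, for every integer `m ≥ 2`. -/
theorem gluon_operator_gauge_invariant (N : ℕ) (hN : 1 ≤ N)
    (A : Fin 4 → (Fin 4 → ℝ) → Matrix (Fin N) (Fin N) ℂ)
    (θ : (Fin 4 → ℝ) → Matrix (Fin N) (Fin N) ℂ)
    (hA : ∀ μ, ContDiff ℝ (⊤ : ℕ∞) (A μ)) (hθ : ContDiff ℝ (⊤ : ℕ∞) θ)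
    (Δ : Fin 4 → ℝ) (m : ℕ) (hm : 2 ≤ m) (x : Fin 4 → ℝ) :
    deriv (fun t : ℝ =>
      Ogdensity Δ m (fun μ y => A μ y + t • gaugeVar A θ μ y) x) 0 = 0 := by
  have hA' : ∀ μ, ContDiff ℝ (⊤:ℕ∞) (A μ) := fun μ => (hA μ).of_le (by simp)
  have hθ' : ContDiff ℝ (⊤:ℕ∞) θ := hθ.of_le (by simp)
  have hterm : ∀ ρ σ : Fin 4, HasDerivAt (fun t : ℝ =>
      etaUp ρ σ * Matrix.trace (Gdelta Δ (Ct A θ t) ρ x *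
        ((covDfun Δ (Ct A θ t))^[m - 2] (Gdelta Δ (Ct A θ t) σ)) x))
      (etaUp ρ σ * Matrix.trace (
        Gdelta Δ A ρ x * dK A θ Δ σ (m - 2) x
        + dG A θ Δ ρ x * ((covDfun Δ A)^[m - 2] (Gdelta Δ A σ)) x)) 0 := by
    intro ρ σ
    obtain ⟨_, _, _, _, hdv⟩ :=
      (PF_G A θ Δ hA' hθ' ρ).mul (PF_K A θ Δ hA' hθ' σ (m - 2))
    have h2 := (trCLM N).hasFDerivAt.comp_hasDerivAt 0 (hdv x)
    exact h2.const_mul (etaUp ρ σ)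
  have hsum := HasDerivAt.sum (fun ρ (_ : ρ ∈ (Finset.univ : Finset (Fin 4))) =>
    HasDerivAt.sum (fun σ (_ : σ ∈ (Finset.univ : Finset (Fin 4))) => hterm ρ σ))
  have hval : (∑ ρ : Fin 4, ∑ σ : Fin 4, etaUp ρ σ * Matrix.trace (
        Gdelta Δ A ρ x * dK A θ Δ σ (m - 2) x
        + dG A θ Δ ρ x * ((covDfun Δ A)^[m - 2] (Gdelta Δ A σ)) x)) = 0 := by
    refine Finset.sum_eq_zero fun ρ _ => Finset.sum_eq_zero fun σ _ => ?_
    rw [dK_eq A θ Δ hA' hθ' σ (m - 2), dG_eq A θ Δ hA' hθ' ρ]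
    beta_reduce
    rw [trace_cancel]
    exact mul_zero _
  rw [hval] at hsum
  have hOg : HasDerivAt (fun t : ℝ =>
      Ogdensity Δ m (fun μ y => A μ y + t • gaugeVar A θ μ y) x) 0 0 := hsum
  exact hOg.deriv
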